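/- arXiv:math/0501209 — 2 statements merged into one kernel-verified Lean document; each statement's English description precedes it below -/
import Mathlib

section
/- Let A be a Noetherian local ring, x an A-regular element, and C_• a complex of finitely generated free A-modules. Then for each i ≥ 1, the length of H_i(C_•) ⊗_A A/xA is at most the length of H_i(C_• ⊗_A A/xA), whenever the latter is finite. -/
/-
Reduce modulo `x` degreewise: `m ↦ m ⊗ 1` sends cycles of `C` to cycles of `C ⊗ A/xA` and
boundaries to boundaries, and since `x` kills `H_i(C ⊗ A/xA)` it induces a map
`H_i(C)/xH_i(C) → H_i(C ⊗ A/xA)`. This map is injective: if a cycle `k` becomes a boundary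
mod `x`, then `k = d c + x n`, and `x · d n = d k - d d c = 0` forces `d n = 0` because `x` is a
nonzerodivisor on the free module `C_{i-1}`; so `[k] = x [n]`. An injection bounds lengths.
-/

open CategoryTheory

/-- Length of a module, as the Krull dimension of its lattice of submodules. -/
noncomputable def moduleLength (R M : Type*) [Ring R] [AddCommGroup M] [Module R M] :
    WithBot ℕ∞ := Order.krullDim (Submodule R M)

/-- The complex `C ⊗_A A/xA` obtained by tensoring each degree with `A/xA`. -/
noncomputable abbrev tensorQuotComplex (A : Type) [CommRing A] (x : A)
    (C : ChainComplex (ModuleCat A) ℕ) : ChainComplex (ModuleCat A) ℕ :=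
  ((MonoidalCategory.tensorRight (ModuleCat.of A (A ⧸ Ideal.span {x}))).mapHomologicalComplex
    (ComplexShape.down ℕ)).obj C

open MonoidalCategory TensorProduct Pointwise

section moduleLength

variable {R M N : Type*} [Ring R] [AddCommGroup M] [Module R M] [AddCommGroup N] [Module R N]

lemma moduleLength_eq_of_linearEquiv (e : M ≃ₗ[R] N) : moduleLength R M = moduleLength R N :=
  Order.krullDim_eq_of_orderIso (Submodule.orderIsoMapComap e)

lemma moduleLength_le_of_injective (f : M →ₗ[R] N) (hf : Function.Injective f) :
    moduleLength R M ≤ moduleLength R N :=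
  Order.krullDim_le_of_strictMono _ (Submodule.map_strictMono_of_injective hf)

end moduleLength

namespace TensorProduct

variable {R M : Type*} [CommRing R] [AddCommGroup M] [Module R M] (I : Ideal R)

variable (M) in
lemma mk_flip_one_surjective : Function.Surjective ((TensorProduct.mk R M (R ⧸ I)).flip 1) := by
  rw [← tensorQuotEquivQuotSMul_symm_comp_mkQ (M := M)]
  exact (tensorQuotEquivQuotSMul M I).symm.surjective.comp (Submodule.mkQ_surjective _)

variable (M) in
lemma ker_mk_flip_one : LinearMap.ker ((TensorProduct.mk R M (R ⧸ I)).flip 1) = I • ⊤ := by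
  rw [← tensorQuotEquivQuotSMul_symm_comp_mkQ (M := M), LinearEquiv.ker_comp, Submodule.ker_mkQ]

lemma smul_eq_zero_of_mem_ideal {r : R} (hr : r ∈ I) (z : M ⊗[R] (R ⧸ I)) : r • z = 0 := by
  obtain ⟨m, rfl⟩ := mk_flip_one_surjective M I z
  rw [← map_smul, ← LinearMap.mem_ker, ker_mk_flip_one]
  exact Submodule.smul_mem_smul hr trivial

end TensorProduct

namespace CategoryTheory.ShortComplex

universe u

variable {A : Type u} [CommRing A] (S : ShortComplex (ModuleCat.{u} A)) (I : Ideal A)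

abbrev moduleCatHomology : Type u :=
  LinearMap.ker S.g.hom ⧸ LinearMap.range S.moduleCatToCycles

abbrev tensorQuot : ShortComplex (ModuleCat.{u} A) :=
  S.map (tensorRight (ModuleCat.of A (A ⧸ I)))

def cyclesTensorQuot : LinearMap.ker S.g.hom →ₗ[A] LinearMap.ker (S.tensorQuot I).g.hom :=
  ((TensorProduct.mk A S.X₂ (A ⧸ I)).flip 1).restrict fun k hk => by
    change S.g.hom k ⊗ₜ[A] (1 : A ⧸ I) = 0
    rw [LinearMap.mem_ker.mp hk, zero_tmul]

lemma cyclesTensorQuot_toCycles (c : S.X₁) :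
    S.cyclesTensorQuot I (S.moduleCatToCycles c) =
      (S.tensorQuot I).moduleCatToCycles (c ⊗ₜ[A] (1 : A ⧸ I)) :=
  rfl

lemma smul_moduleCatHomology_tensorQuot_eq_zero {r : A} (hr : r ∈ I)
    (z : (S.tensorQuot I).moduleCatHomology) : r • z = 0 := by
  obtain ⟨w, rfl⟩ := Submodule.Quotient.mk_surjective _ z
  have hw : r • w = 0 := Subtype.ext (smul_eq_zero_of_mem_ideal I hr w.1)
  rw [← Submodule.Quotient.mk_smul, hw, Submodule.Quotient.mk_zero]

def toHomologyTensorQuot :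
    S.moduleCatHomology →ₗ[A] (S.tensorQuot I).moduleCatHomology :=
  Submodule.mapQ _ _ (S.cyclesTensorQuot I) <| by
    rintro _ ⟨c, rfl⟩
    exact ⟨c ⊗ₜ[A] 1, (S.cyclesTensorQuot_toCycles I c).symm⟩

def quotSMulTopToHomologyTensorQuot :
    (S.moduleCatHomology ⧸ (I • ⊤ : Submodule A S.moduleCatHomology)) →ₗ[A]
      (S.tensorQuot I).moduleCatHomology :=
  Submodule.liftQ _ (S.toHomologyTensorQuot I) <| Submodule.smul_le.2 fun _ hr _ _ => by
    rw [LinearMap.mem_ker, map_smul]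
    exact S.smul_moduleCatHomology_tensorQuot_eq_zero I hr _

variable {S} {x : A}

lemma exists_eq_toCycles_add_smul (hx : IsSMulRegular S.X₃ x) (k : LinearMap.ker S.g.hom)
    (hk : S.cyclesTensorQuot (Ideal.span {x}) k ∈
      LinearMap.range (S.tensorQuot (Ideal.span {x})).moduleCatToCycles) :
    ∃ c n, k = S.moduleCatToCycles c + x • n := by
  obtain ⟨t, ht⟩ := hk
  obtain ⟨c, rfl⟩ := mk_flip_one_surjective S.X₁ _ t
  have hkc : (k : S.X₂) - S.f c ∈ x • (⊤ : Submodule A S.X₂) := by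
    rw [← Submodule.ideal_span_singleton_smul, ← ker_mk_flip_one, LinearMap.mem_ker, map_sub,
      sub_eq_zero]
    exact (congrArg Subtype.val ht).symm
  obtain ⟨n, -, hn⟩ := (Submodule.mem_smul_pointwise_iff_exists _ _ _).mp hkc
  have hgn : S.g n = 0 := hx <| show x • S.g n = x • 0 by
    rw [← map_smul, hn, map_sub, k.2, S.moduleCat_zero_apply, sub_zero, smul_zero]
  exact ⟨c, ⟨n, hgn⟩, Subtype.ext (by
    rw [Submodule.coe_add, Submodule.coe_smul, hn]
    exact (add_sub_cancel _ _).symm)⟩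

theorem quotSMulTopToHomologyTensorQuot_injective (hx : IsSMulRegular S.X₃ x) :
    Function.Injective (S.quotSMulTopToHomologyTensorQuot (Ideal.span {x})) := by
  rw [← LinearMap.ker_eq_bot]
  refine Submodule.ker_liftQ_eq_bot _ _ _ fun h hh => ?_
  obtain ⟨k, rfl⟩ := Submodule.Quotient.mk_surjective _ h
  obtain ⟨c, n, rfl⟩ := exists_eq_toCycles_add_smul hx k
    ((Submodule.Quotient.mk_eq_zero _).mp hh)
  rw [Submodule.Quotient.mk_add,
    (Submodule.Quotient.mk_eq_zero _).mpr (LinearMap.mem_range_self _ c), zero_add,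
    Submodule.Quotient.mk_smul]
  exact Submodule.smul_mem_smul (Ideal.mem_span_singleton_self x) trivial

theorem moduleLength_homology_tensor_le (hx : IsSMulRegular S.X₃ x) :
    moduleLength A (S.homology ⊗[A] (A ⧸ Ideal.span {x})) ≤
      moduleLength A (S.tensorQuot (Ideal.span {x})).homology :=
  calc moduleLength A (S.homology ⊗[A] (A ⧸ Ideal.span {x}))
      = moduleLength A (S.moduleCatHomology ⧸
          (Ideal.span {x} • ⊤ : Submodule A S.moduleCatHomology)) :=
        moduleLength_eq_of_linearEquiv <|
          TensorProduct.congr S.moduleCatHomologyIso.toLinearEquiv (LinearEquiv.refl _ _) ≪≫ₗ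
            tensorQuotEquivQuotSMul _ _
    _ ≤ moduleLength A (S.tensorQuot (Ideal.span {x})).moduleCatHomology :=
        moduleLength_le_of_injective _ (quotSMulTopToHomologyTensorQuot_injective hx)
    _ = moduleLength A (S.tensorQuot (Ideal.span {x})).homology :=
        (moduleLength_eq_of_linearEquiv
          (S.tensorQuot (Ideal.span {x})).moduleCatHomologyIso.toLinearEquiv).symm

end CategoryTheory.ShortComplex

theorem length_homology_tensor_le_general
    (A : Type) [CommRing A]
    (x : A) (hx : IsSMulRegular A x)
    (C : ChainComplex (ModuleCat A) ℕ)
    (hfree : ∀ i, Module.Free A (C.X i))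
    (i : ℕ) :
    moduleLength A (TensorProduct A (C.homology i) (A ⧸ Ideal.span {x}))
      ≤ moduleLength A ((tensorQuotComplex A x C).homology i) := by
  have : Module.Free A (C.sc i).X₃ := hfree _
  exact (C.sc i).moduleLength_homology_tensor_le <|
    Module.Flat.isSMulRegular_of_isRegular (isLeftRegular_iff_isRegular.mp hx)

/-- For a Noetherian local ring `A`, an `A`-regular element `x`, and a chain complex `C_•` of
finitely generated free `A`-modules, for each `i ≥ 1` one has
`ℓ(H_i(C) ⊗ A/xA) ≤ ℓ(H_i(C ⊗ A/xA))` whenever the latter is finite. -/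
theorem length_homology_tensor_le
    (A : Type) [CommRing A] [IsNoetherianRing A] [IsLocalRing A]
    (x : A) (hx : IsSMulRegular A x)
    (C : ChainComplex (ModuleCat A) ℕ)
    (hfree : ∀ i, Module.Free A (C.X i)) (hfin : ∀ i, Module.Finite A (C.X i))
    (i : ℕ) (hi : 1 ≤ i)
    (hlen : moduleLength A ((tensorQuotComplex A x C).homology i) < ⊤) :
    moduleLength A (TensorProduct A (C.homology i) (A ⧸ Ideal.span {x}))
      ≤ moduleLength A ((tensorQuotComplex A x C).homology i) :=
  length_homology_tensor_le_general A x hx C hfree i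
end

section
/- Let K be a field of characteristic p > 0, n ≥ 1, q = p^n, and let S = K[X,Y,U,V]/(X^q, Y^q, U^q, V^q). Suppose λ_0, ..., λ_{q-1} ∈ K satisfy Σ_{i=0}^{q-1} λ_i x^{q-1} y^i u^{q-1-i} ∈ (xy − uv)·S, where x, y, u, v denote the images of X, Y, U, V in S. Then λ_i = 0 for all i. -/
open MvPolynomial

/-- `S = K[X,Y,U,V]/(X^q, Y^q, U^q, V^q)`. -/
noncomputable abbrev truncRing (K : Type) [Field K] (q : ℕ) : Type :=
  MvPolynomial (Fin 4) K ⧸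
    Ideal.span {(X 0 : MvPolynomial (Fin 4) K) ^ q, (X 1) ^ q, (X 2) ^ q, (X 3) ^ q}

/-!
The substitution `x ↦ ab, y ↦ cd, u ↦ ad, v ↦ cb` (the Segre parametrisation of the quadric
`xy = uv`) kills `xy - uv` and sends each of `x^q, y^q, u^q, v^q` into the monomial ideal
`(b^q, d^q)`. It sends `x^{q-1} y^i u^{q-1-i}` to the monomial `a^{2q-2-i} b^{q-1} c^i d^{q-1}`;
these are pairwise distinct and none of them lies in `(b^q, d^q)`. So a relation
`Σ λ_i x^{q-1} y^i u^{q-1-i} ∈ (xy - uv)` in `S` becomes, after substitution, a combination of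
standard monomials lying in a monomial ideal, which forces every `λ_i` to vanish.
-/

section MonomialIdeal

variable {σ R : Type*} [CommSemiring R]

theorem MvPolynomial.coeff_eq_zero_of_mem_ideal_span_monomial {f : MvPolynomial σ R}
    {s : Set (σ →₀ ℕ)} (hf : f ∈ Ideal.span ((fun t => monomial t (1 : R)) '' s))
    {m : σ →₀ ℕ} (hm : ∀ t ∈ s, ¬t ≤ m) : coeff m f = 0 := by
  by_contra h
  obtain ⟨t, ht, htm⟩ := mem_ideal_span_monomial_image.1 hf m (mem_support_iff.2 h)
  exact hm t ht htm

theorem MvPolynomial.coeff_sum_monomial_of_injective {ι : Type*} [Fintype ι]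
    {e : ι → σ →₀ ℕ} (he : Function.Injective e) (c : ι → R) (i : ι) :
    coeff (e i) (∑ j, monomial (e j) (c j)) = c i := by
  classical
  rw [coeff_sum, Finset.sum_eq_single i]
  · simp
  · intro j _ hji
    rw [coeff_monomial, if_neg (he.ne hji)]
  · simp

end MonomialIdeal

section Segre

variable {R : Type*} [CommSemiring R]

noncomputable def segreSubst : MvPolynomial (Fin 4) R →ₐ[R] MvPolynomial (Fin 4) R :=
  aeval ![X 0 * X 1, X 2 * X 3, X 0 * X 3, X 2 * X 1]

noncomputable def segreExponent (a b c : ℕ) : Fin 4 →₀ ℕ :=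
  Finsupp.single 0 (a + c) + Finsupp.single 1 a + Finsupp.single 2 b + Finsupp.single 3 (b + c)

variable (a b c : ℕ)

@[simp]
theorem segreExponent_apply_one : segreExponent a b c 1 = a := by
  simp [segreExponent]

@[simp]
theorem segreExponent_apply_two : segreExponent a b c 2 = b := by
  simp [segreExponent]

@[simp]
theorem segreExponent_apply_three : segreExponent a b c 3 = b + c := by
  simp [segreExponent]

theorem not_single_le_segreExponent {q i : ℕ} (hi : i < q) :
    ∀ t ∈ ({Finsupp.single 1 q, Finsupp.single 3 q} : Set (Fin 4 →₀ ℕ)),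
      ¬t ≤ segreExponent (q - 1) i (q - 1 - i) := by
  rintro t (rfl | rfl) h
  · rw [Finsupp.single_le_iff, segreExponent_apply_one] at h
    omega
  · rw [Finsupp.single_le_iff, segreExponent_apply_three] at h
    omega

theorem segreSubst_X_pow_mul :
    segreSubst (X 0 ^ a * X 1 ^ b * X 2 ^ c : MvPolynomial (Fin 4) R) =
      monomial (segreExponent a b c) 1 := by
  have hmonomial : monomial (segreExponent a b c) (1 : R) =
      X 0 ^ (a + c) * X 1 ^ a * X 2 ^ b * X 3 ^ (b + c) := by
    simp only [segreExponent, X_pow_eq_monomial, monomial_mul, mul_one]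
  rw [hmonomial]
  simp only [segreSubst, map_mul, map_pow, aeval_X, Matrix.cons_val_zero, Matrix.cons_val_one,
    Matrix.cons_val]
  ring

end Segre

theorem span_sup_span_le_comap_segreSubst {R : Type*} [CommRing R] (q : ℕ) :
    Ideal.span {X 0 * X 1 - X 2 * X 3} ⊔
        Ideal.span {(X 0 : MvPolynomial (Fin 4) R) ^ q, X 1 ^ q, X 2 ^ q, X 3 ^ q} ≤
      (Ideal.span {(X 1 : MvPolynomial (Fin 4) R) ^ q, X 3 ^ q}).comap (segreSubst (R := R)) := by
  have hX1 : X 1 ^ q ∈ Ideal.span {(X 1 : MvPolynomial (Fin 4) R) ^ q, X 3 ^ q} :=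
    Ideal.subset_span (by simp)
  have hX3 : X 3 ^ q ∈ Ideal.span {(X 1 : MvPolynomial (Fin 4) R) ^ q, X 3 ^ q} :=
    Ideal.subset_span (by simp)
  simp only [sup_le_iff, Ideal.span_le, Set.insert_subset_iff, Set.singleton_subset_iff,
    SetLike.mem_coe, Ideal.mem_comap, map_sub, map_mul, map_pow, segreSubst, aeval_X,
    Matrix.cons_val_zero, Matrix.cons_val_one, Matrix.cons_val, mul_pow]
  refine ⟨?_, Ideal.mul_mem_left _ _ hX1, Ideal.mul_mem_left _ _ hX3,
    Ideal.mul_mem_left _ _ hX3, Ideal.mul_mem_left _ _ hX1⟩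
  rw [show X 0 * X 1 * (X 2 * X 3) - X 0 * X 3 * (X 2 * X 1) = (0 : MvPolynomial (Fin 4) R) by
    ring]
  exact zero_mem _

theorem coeffs_vanish_of_mem_span_general
    (K : Type) [Field K]
    (q : ℕ)
    (x y u v : truncRing K q)
    (hx : x = Ideal.Quotient.mk _ (X 0)) (hy : y = Ideal.Quotient.mk _ (X 1))
    (hu : u = Ideal.Quotient.mk _ (X 2)) (hv : v = Ideal.Quotient.mk _ (X 3))
    (lam : Fin q → K)
    (hmem : (∑ i : Fin q, lam i • (x ^ (q - 1) * y ^ (i : ℕ) * u ^ (q - 1 - (i : ℕ)))) ∈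
      Ideal.span {x * y - u * v}) :
    ∀ i, lam i = 0 := by
  subst hx hy hu hv
  set P : MvPolynomial (Fin 4) K :=
    ∑ i : Fin q, lam i • (X 0 ^ (q - 1) * X 1 ^ (i : ℕ) * X 2 ^ (q - 1 - (i : ℕ)))
  have hP : P ∈ Ideal.span {X 0 * X 1 - X 2 * X 3} ⊔
      Ideal.span {(X 0 : MvPolynomial (Fin 4) K) ^ q, X 1 ^ q, X 2 ^ q, X 3 ^ q} := by
    rw [← Ideal.mem_quotient_iff_mem_sup, Ideal.map_span, Set.image_singleton]
    convert hmem using 1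
    · rw [map_sub, map_mul, map_mul]
    · rw [← Ideal.Quotient.mkₐ_eq_mk K]
      simp only [P, map_sum, map_smul, map_mul, map_pow]
  set e : Fin q → Fin 4 →₀ ℕ := fun i => segreExponent (q - 1) i (q - 1 - i)
  have he : Function.Injective e := fun i j h => Fin.ext (by simpa [e] using congr($h 2))
  have hsegre : segreSubst P = ∑ i, monomial (e i) (lam i) := by
    simp only [P, map_sum, map_smul, segreSubst_X_pow_mul, smul_monomial, smul_eq_mul, mul_one]
    rfl
  intro i
  rw [← coeff_sum_monomial_of_injective he lam i, ← hsegre]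
  refine coeff_eq_zero_of_mem_ideal_span_monomial ?_ (not_single_le_segreExponent i.isLt)
  simpa [Set.image_pair, X_pow_eq_monomial] using span_sup_span_le_comap_segreSubst q hP

/-- If `λ_0, ..., λ_{q-1} ∈ K` satisfy `Σ λ_i x^{q-1} y^i u^{q-1-i} ∈ (xy - uv)·S` in
`S = K[X,Y,U,V]/(X^q, Y^q, U^q, V^q)` with `q = p^n`, then all `λ_i = 0`. -/
theorem coeffs_vanish_of_mem_span
    (K : Type) [Field K] (p : ℕ) [CharP K p] (hp : 0 < p) (n : ℕ) (hn : 1 ≤ n)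
    (q : ℕ) (hq : q = p ^ n)
    (x y u v : truncRing K q)
    (hx : x = Ideal.Quotient.mk _ (X 0)) (hy : y = Ideal.Quotient.mk _ (X 1))
    (hu : u = Ideal.Quotient.mk _ (X 2)) (hv : v = Ideal.Quotient.mk _ (X 3))
    (lam : Fin q → K)
    (hmem : (∑ i : Fin q, lam i • (x ^ (q - 1) * y ^ (i : ℕ) * u ^ (q - 1 - (i : ℕ)))) ∈
      Ideal.span {x * y - u * v}) :
    ∀ i, lam i = 0 :=
  coeffs_vanish_of_mem_span_general K q x y u v hx hy hu hv lam hmem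
end
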